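/- Let k ≥ 2, n ≥ 1, and let c_1,...,c_n ∈ {1,...,k} with N_j = N_1 for all j ∈ {1,...,k−1} (incorrect labels occur equally often). Then N_k > N_1 if and only if (1/n)∑_{i=1}^n c_i > (k+1)/2. -/

import Mathlib

/-!
Centre the labels at `(k + 1) / 2`: grouping by label,
`2 ∑ cᵢ - (k + 1) n = ∑ⱼ Nⱼ (2j - (k + 1))`. The centred weights `2j - (k + 1)` sum to zero
over `j = 1, …, k`, so when all `Nⱼ` with `j < k` equal `N₁` only the excess `Nₖ - N₁`
survives, at the weight `k - 1 > 0`. Hence `2 ∑ cᵢ - (k + 1) n = (k - 1) (Nₖ - N₁)`, and the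
two sides of the equivalence have the same sign.
-/

open Finset

theorem sum_Icc_two_mul_sub_eq_zero (k : ℕ) :
    ∑ j ∈ Icc 1 k, (2 * (j : ℝ) - (k + 1)) = 0 := by
  induction k with
  | zero => simp
  | succ k ih =>
    rw [sum_Icc_succ_top (by omega)]
    simp only [sum_sub_distrib, sum_const, Nat.card_Icc, nsmul_eq_mul] at ih ⊢
    push_cast at ih ⊢
    linarith

theorem sum_mul_eq_of_eq_off_single {R ι : Type*} [NonUnitalNonAssocRing R] {t : Finset ι}
    {N w : ι → R} {a b : ι} (hb : b ∈ t) (hN : ∀ j ∈ t, j ≠ b → N j = N a)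
    (hw : ∑ j ∈ t, w j = 0) :
    ∑ j ∈ t, N j * w j = (N b - N a) * w b := by
  have hshift : ∑ j ∈ t, N j * w j = ∑ j ∈ t, (N j - N a) * w j := by
    simp only [sub_mul, sum_sub_distrib, ← mul_sum, hw, mul_zero, sub_zero]
  rw [hshift, sum_eq_single_of_mem b hb]
  intro j hj hjb
  rw [hN j hj hjb, sub_self, zero_mul]

theorem majority_correct_iff_average (k n : ℕ) (hk : 2 ≤ k) (hn : 1 ≤ n)
    (c : ℕ → ℕ) (hrange : ∀ i < n, c i ∈ Finset.Icc 1 k)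
    (N : ℕ → ℕ) (hN : ∀ j, N j = ((Finset.range n).filter (fun i => c i = j)).card)
    (huniform : ∀ j, 1 ≤ j → j < k → N j = N 1) :
    N k > N 1 ↔ (∑ i ∈ Finset.range n, (c i : ℝ)) / n > ((k : ℝ) + 1) / 2 := by
  have hmaps : ∀ i ∈ range n, c i ∈ Icc 1 k := fun i hi => hrange i (mem_range.mp hi)
  have hexcess : 2 * ∑ i ∈ range n, (c i : ℝ) - (k + 1) * n = ((N k : ℝ) - N 1) * (k - 1) :=
    calc 2 * ∑ i ∈ range n, (c i : ℝ) - (k + 1) * n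
        = ∑ i ∈ range n, (2 * (c i : ℝ) - (k + 1)) := by
          rw [sum_sub_distrib, mul_sum, sum_const, card_range, nsmul_eq_mul, mul_comm]
      _ = ∑ j ∈ Icc 1 k, (N j : ℝ) * (2 * j - (k + 1)) := by
          rw [← sum_fiberwise_of_maps_to' hmaps (fun j => 2 * (j : ℝ) - (k + 1))]
          simp only [sum_const, hN, nsmul_eq_mul]
      _ = ((N k : ℝ) - N 1) * (k - 1) := by
          rw [sum_mul_eq_of_eq_off_single (a := 1) (right_mem_Icc.mpr (by omega))
            (fun j hj hjk => ?_) (sum_Icc_two_mul_sub_eq_zero k)]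
          · ring
          · obtain ⟨hj1, hjk'⟩ := mem_Icc.mp hj
            rw [huniform j hj1 (lt_of_le_of_ne hjk' hjk)]
  have hn_pos : (0 : ℝ) < n := by exact_mod_cast hn
  have hk_pos : (0 : ℝ) < k - 1 := by
    have : (2 : ℝ) ≤ k := by exact_mod_cast hk
    linarith
  rw [gt_iff_lt, gt_iff_lt, div_lt_div_iff₀ two_pos hn_pos, ← sub_pos (α := ℝ),
    mul_comm _ (2 : ℝ), hexcess, mul_pos_iff_of_pos_right hk_pos, sub_pos, Nat.cast_lt]
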